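/- Let (Cᵢ,d), i = 1,2,3, be ℤ-graded cochain complexes of modules over a commutative ring, f₁, f₂ integers, and φ₁ : C₁^k → C₂^{k+1−f₁}, φ₂ : C₂^k → C₃^{k+1−f₂} maps satisfying d∘φᵢ = φᵢ∘d, φ₂∘φ₁ = 0, with each Cᵢ carrying a graded product ∧ᵢ satisfying the Leibniz rule for d, and with φ₁, φ₂ multiplicative. Then for every α = (α₁,α₂,α₃) ∈ C^k = C₁^k ⊕ C₂^{k−f₁} ⊕ C₃^{k−f₁−f₂} and every γ ∈ C₁^m the following Leibniz-type identity holds for the differential D(u,v,w) = (du, φ₁u − dv, φ₂v + dw): D(α ∧ γ) = (Dα) ∧ γ + (−1)^k ( α₁ ∧₁ dγ, −(−1)^{f₁} α₂ ∧₂ φ₁(dγ), (−1)^{f₁+f₂} α₃ ∧₃ φ₂φ₁(dγ) ), where α ∧ γ = (α₁ ∧₁ γ, α₂ ∧₂ φ₁γ, α₃ ∧₃ φ₂φ₁γ). In particular, if f₁ and f₂ are both odd, then D(α ∧ γ) = (Dα) ∧ γ + (−1)^k α ∧ dγ. -/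

import Mathlib

/-- The triple rolled-up differential
`D (u, v, w) = (d₁ u, φ₁ u - d₂ v, φ₂ v + d₃ w)`. -/
def rollD3 {R M₁ M₂ M₃ : Type*} [CommRing R]
    [AddCommGroup M₁] [Module R M₁] [AddCommGroup M₂] [Module R M₂]
    [AddCommGroup M₃] [Module R M₃]
    (d₁ : M₁ →ₗ[R] M₁) (d₂ : M₂ →ₗ[R] M₂) (d₃ : M₃ →ₗ[R] M₃)
    (φ₁ : M₁ →ₗ[R] M₂) (φ₂ : M₂ →ₗ[R] M₃) :
    (M₁ × M₂ × M₃) →ₗ[R] M₁ × M₂ × M₃ :=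
  LinearMap.prod (d₁ ∘ₗ LinearMap.fst R M₁ (M₂ × M₃))
    (LinearMap.prod
      ((φ₁ ∘ₗ LinearMap.fst R M₁ (M₂ × M₃)) -
        (d₂ ∘ₗ LinearMap.fst R M₂ M₃ ∘ₗ LinearMap.snd R M₁ (M₂ × M₃)))
      ((φ₂ ∘ₗ LinearMap.fst R M₂ M₃ ∘ₗ LinearMap.snd R M₁ (M₂ × M₃)) +
        (d₃ ∘ₗ LinearMap.snd R M₂ M₃ ∘ₗ LinearMap.snd R M₁ (M₂ × M₃))))

/-!
Each component of `D (α ∧ γ)` is expanded with the Leibniz rule of the corresponding complex,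
after moving `φ₁` and `φ₂` across the products (multiplicativity) and across the differentials
(chain maps). The component of degree `k - f₁` (resp. `k - f₁ - f₂`) picks up the sign
`(-1)^(k - f₁)` (resp. `(-1)^(k - f₁ - f₂)`), which splits off `(-1)^k`; for odd `f₁`, `f₂` the
remaining signs `-(-1)^f₁` and `(-1)^(f₁ + f₂)` are both `1`.
-/

section

variable {R M₁ M₂ M₃ : Type*} [CommRing R]
    [AddCommGroup M₁] [Module R M₁] [AddCommGroup M₂] [Module R M₂]
    [AddCommGroup M₃] [Module R M₃]

@[simp]
theorem rollD3_apply (d₁ : M₁ →ₗ[R] M₁) (d₂ : M₂ →ₗ[R] M₂) (d₃ : M₃ →ₗ[R] M₃)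
    (φ₁ : M₁ →ₗ[R] M₂) (φ₂ : M₂ →ₗ[R] M₃) (u : M₁) (v : M₂) (w : M₃) :
    rollD3 d₁ d₂ d₃ φ₁ φ₂ (u, v, w) = (d₁ u, φ₁ u - d₂ v, φ₂ v + d₃ w) :=
  rfl

/-- The rolled-up components `φ a ± d x` of `D` satisfy a Leibniz rule against products `x ∧ φ b`
pulled back along a multiplicative chain map `φ`. -/
theorem map_mul_add_smul_leibniz {N M : Type*} [AddCommGroup N] [Module R N]
    [AddCommGroup M] [Module R M] (dN : N →ₗ[R] N) (dM : M →ₗ[R] M) (φ : N →ₗ[R] M)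
    (mulN : N →ₗ[R] N →ₗ[R] N) (mulM : M →ₗ[R] M →ₗ[R] M)
    (hmul : ∀ a b, φ (mulN a b) = mulM (φ a) (φ b)) (s : ℤˣ) (j : ℤ) (a b : N) (x : M)
    (hd : dM (φ b) = φ (dN b))
    (hLeib : ∀ y, dM (mulM x y) = mulM (dM x) y + ((j.negOnePow : ℤ) • mulM x (dM y))) :
    φ (mulN a b) + (s : ℤ) • dM (mulM x (φ b))
      = mulM (φ a + (s : ℤ) • dM x) (φ b) + ((s * j.negOnePow : ℤˣ) : ℤ) • mulM x (φ (dN b)) := by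
  rw [hmul, hLeib, hd, map_add, map_zsmul, LinearMap.add_apply, LinearMap.smul_apply,
    smul_add, smul_smul, Units.val_mul]
  abel

variable (d₁ : M₁ →ₗ[R] M₁) (d₂ : M₂ →ₗ[R] M₂) (d₃ : M₃ →ₗ[R] M₃)
    (φ₁ : M₁ →ₗ[R] M₂) (φ₂ : M₂ →ₗ[R] M₃)
    (mul₁ : M₁ →ₗ[R] M₁ →ₗ[R] M₁) (mul₂ : M₂ →ₗ[R] M₂ →ₗ[R] M₂) (mul₃ : M₃ →ₗ[R] M₃ →ₗ[R] M₃)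

theorem rollD3_wedge (hφ₁d : ∀ x, d₂ (φ₁ x) = φ₁ (d₁ x)) (hφ₂d : ∀ x, d₃ (φ₂ x) = φ₂ (d₂ x))
    (hmul₁ : ∀ x y, φ₁ (mul₁ x y) = mul₂ (φ₁ x) (φ₁ y))
    (hmul₂ : ∀ x y, φ₂ (mul₂ x y) = mul₃ (φ₂ x) (φ₂ y))
    {k f₁ f₂ : ℤ} {α₁ γ : M₁} {α₂ : M₂} {α₃ : M₃}
    (hLeib₁ : ∀ y, d₁ (mul₁ α₁ y) = mul₁ (d₁ α₁) y + ((k.negOnePow : ℤ) • mul₁ α₁ (d₁ y)))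
    (hLeib₂ : ∀ y, d₂ (mul₂ α₂ y)
      = mul₂ (d₂ α₂) y + (((k - f₁).negOnePow : ℤ) • mul₂ α₂ (d₂ y)))
    (hLeib₃ : ∀ y, d₃ (mul₃ α₃ y)
      = mul₃ (d₃ α₃) y + (((k - f₁ - f₂).negOnePow : ℤ) • mul₃ α₃ (d₃ y))) :
    rollD3 d₁ d₂ d₃ φ₁ φ₂ (mul₁ α₁ γ, mul₂ α₂ (φ₁ γ), mul₃ α₃ (φ₂ (φ₁ γ)))
      = (mul₁ (rollD3 d₁ d₂ d₃ φ₁ φ₂ (α₁, α₂, α₃)).1 γ,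
         mul₂ (rollD3 d₁ d₂ d₃ φ₁ φ₂ (α₁, α₂, α₃)).2.1 (φ₁ γ),
         mul₃ (rollD3 d₁ d₂ d₃ φ₁ φ₂ (α₁, α₂, α₃)).2.2 (φ₂ (φ₁ γ)))
        + (k.negOnePow : ℤ) •
          (mul₁ α₁ (d₁ γ), -((f₁.negOnePow : ℤ) • mul₂ α₂ (φ₁ (d₁ γ))),
            ((f₁ + f₂).negOnePow : ℤ) • mul₃ α₃ (φ₂ (φ₁ (d₁ γ)))) := by
  have h₂ := map_mul_add_smul_leibniz d₁ d₂ φ₁ mul₁ mul₂ hmul₁ (-1) (k - f₁) α₁ γ α₂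
    (hφ₁d γ) hLeib₂
  have h₃ := map_mul_add_smul_leibniz d₂ d₃ φ₂ mul₂ mul₃ hmul₂ 1 (k - f₁ - f₂) α₂ (φ₁ γ) α₃
    (hφ₂d _) hLeib₃
  simp only [Units.val_neg, Units.val_one, neg_smul, one_smul, ← sub_eq_add_neg, one_mul,
    neg_mul, Int.negOnePow_sub, hφ₁d] at h₂ h₃
  simp only [rollD3_apply, Prod.smul_mk, Prod.mk_add_mk, hLeib₁, h₂, h₃, Int.negOnePow_add,
    Units.val_mul, smul_neg, mul_smul, ← sub_eq_add_neg]

end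

theorem stmt_5_general {R M₁ M₂ M₃ : Type*} [CommRing R]
    [AddCommGroup M₁] [Module R M₁] [AddCommGroup M₂] [Module R M₂]
    [AddCommGroup M₃] [Module R M₃]
    (C₁ : ℤ → Submodule R M₁) (C₂ : ℤ → Submodule R M₂) (C₃ : ℤ → Submodule R M₃)
    (d₁ : M₁ →ₗ[R] M₁) (d₂ : M₂ →ₗ[R] M₂) (d₃ : M₃ →ₗ[R] M₃)
    (f₁ f₂ : ℤ) (φ₁ : M₁ →ₗ[R] M₂) (φ₂ : M₂ →ₗ[R] M₃)
    (hφ₁d : ∀ x, d₂ (φ₁ x) = φ₁ (d₁ x))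
    (hφ₂d : ∀ x, d₃ (φ₂ x) = φ₂ (d₂ x))
    (mul₁ : M₁ →ₗ[R] M₁ →ₗ[R] M₁) (mul₂ : M₂ →ₗ[R] M₂ →ₗ[R] M₂)
    (mul₃ : M₃ →ₗ[R] M₃ →ₗ[R] M₃)
    (hLeib₁ : ∀ j : ℤ, ∀ x ∈ C₁ j, ∀ y : M₁,
      d₁ (mul₁ x y) = mul₁ (d₁ x) y + ((j.negOnePow : ℤ) • mul₁ x (d₁ y)))
    (hLeib₂ : ∀ j : ℤ, ∀ x ∈ C₂ j, ∀ y : M₂,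
      d₂ (mul₂ x y) = mul₂ (d₂ x) y + ((j.negOnePow : ℤ) • mul₂ x (d₂ y)))
    (hLeib₃ : ∀ j : ℤ, ∀ x ∈ C₃ j, ∀ y : M₃,
      d₃ (mul₃ x y) = mul₃ (d₃ x) y + ((j.negOnePow : ℤ) • mul₃ x (d₃ y)))
    (hmul₁ : ∀ x y : M₁, φ₁ (mul₁ x y) = mul₂ (φ₁ x) (φ₁ y))
    (hmul₂ : ∀ x y : M₂, φ₂ (mul₂ x y) = mul₃ (φ₂ x) (φ₂ y)) :
    -- the Leibniz-type identity for `D`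
    (∀ k m : ℤ, ∀ α₁ ∈ C₁ k, ∀ α₂ ∈ C₂ (k - f₁), ∀ α₃ ∈ C₃ (k - f₁ - f₂),
      ∀ γ ∈ C₁ m,
        rollD3 d₁ d₂ d₃ φ₁ φ₂
            (mul₁ α₁ γ, mul₂ α₂ (φ₁ γ), mul₃ α₃ (φ₂ (φ₁ γ)))
          = (mul₁ (rollD3 d₁ d₂ d₃ φ₁ φ₂ (α₁, α₂, α₃)).1 γ,
             mul₂ (rollD3 d₁ d₂ d₃ φ₁ φ₂ (α₁, α₂, α₃)).2.1 (φ₁ γ),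
             mul₃ (rollD3 d₁ d₂ d₃ φ₁ φ₂ (α₁, α₂, α₃)).2.2 (φ₂ (φ₁ γ)))
            + (k.negOnePow : ℤ) •
              (((mul₁ α₁ (d₁ γ),
                 -((f₁.negOnePow : ℤ) • mul₂ α₂ (φ₁ (d₁ γ))),
                 ((f₁ + f₂).negOnePow : ℤ) • mul₃ α₃ (φ₂ (φ₁ (d₁ γ)))))
                : M₁ × M₂ × M₃))
    -- in particular, when `f₁` and `f₂` are both odd, `D` satisfies the Leibniz rule
    ∧ (Odd f₁ → Odd f₂ →
        ∀ k m : ℤ, ∀ α₁ ∈ C₁ k, ∀ α₂ ∈ C₂ (k - f₁), ∀ α₃ ∈ C₃ (k - f₁ - f₂),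
        ∀ γ ∈ C₁ m,
          rollD3 d₁ d₂ d₃ φ₁ φ₂
              (mul₁ α₁ γ, mul₂ α₂ (φ₁ γ), mul₃ α₃ (φ₂ (φ₁ γ)))
            = (mul₁ (rollD3 d₁ d₂ d₃ φ₁ φ₂ (α₁, α₂, α₃)).1 γ,
               mul₂ (rollD3 d₁ d₂ d₃ φ₁ φ₂ (α₁, α₂, α₃)).2.1 (φ₁ γ),
               mul₃ (rollD3 d₁ d₂ d₃ φ₁ φ₂ (α₁, α₂, α₃)).2.2 (φ₂ (φ₁ γ)))
              + (k.negOnePow : ℤ) •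
                (((mul₁ α₁ (d₁ γ),
                   mul₂ α₂ (φ₁ (d₁ γ)),
                   mul₃ α₃ (φ₂ (φ₁ (d₁ γ))))) : M₁ × M₂ × M₃)) := by
  have wedge : ∀ k m : ℤ, ∀ α₁ ∈ C₁ k, ∀ α₂ ∈ C₂ (k - f₁), ∀ α₃ ∈ C₃ (k - f₁ - f₂),
      ∀ γ ∈ C₁ m, _ := fun k _ α₁ hα₁ α₂ hα₂ α₃ hα₃ γ _ =>
    rollD3_wedge d₁ d₂ d₃ φ₁ φ₂ mul₁ mul₂ mul₃ hφ₁d hφ₂d hmul₁ hmul₂ (γ := γ)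
      (hLeib₁ k α₁ hα₁) (hLeib₂ _ α₂ hα₂) (hLeib₃ _ α₃ hα₃)
  refine ⟨wedge, fun hf₁ hf₂ k m α₁ hα₁ α₂ hα₂ α₃ hα₃ γ hγ => ?_⟩
  rw [wedge k m α₁ hα₁ α₂ hα₂ α₃ hα₃ γ hγ, Int.negOnePow_add, Int.negOnePow_odd _ hf₁,
    Int.negOnePow_odd _ hf₂]
  simp

/-- Under the hypotheses of the triple rolled-up complex with graded
products `∧ᵢ` satisfying the Leibniz rule and multiplicative chain maps `φ₁`, `φ₂`,
for `α = (α₁, α₂, α₃) ∈ C^k` and `γ ∈ C₁^m` one has the Leibniz-type identity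
`D (α ∧ γ) = (D α) ∧ γ + (-1)^k (α₁ ∧₁ dγ, -(-1)^{f₁} α₂ ∧₂ φ₁ (dγ),
(-1)^{f₁+f₂} α₃ ∧₃ φ₂ φ₁ (dγ))`, where
`α ∧ γ = (α₁ ∧₁ γ, α₂ ∧₂ φ₁ γ, α₃ ∧₃ φ₂ φ₁ γ)`.  In particular, if `f₁` and `f₂`
are both odd, then `D (α ∧ γ) = (D α) ∧ γ + (-1)^k α ∧ dγ`. -/
theorem stmt_5 {R M₁ M₂ M₃ : Type*} [CommRing R]
    [AddCommGroup M₁] [Module R M₁] [AddCommGroup M₂] [Module R M₂]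
    [AddCommGroup M₃] [Module R M₃]
    (C₁ : ℤ → Submodule R M₁) (C₂ : ℤ → Submodule R M₂) (C₃ : ℤ → Submodule R M₃)
    (d₁ : M₁ →ₗ[R] M₁) (d₂ : M₂ →ₗ[R] M₂) (d₃ : M₃ →ₗ[R] M₃)
    (hd₁ : ∀ k : ℤ, ∀ x ∈ C₁ k, d₁ x ∈ C₁ (k + 1))
    (hd₂ : ∀ k : ℤ, ∀ x ∈ C₂ k, d₂ x ∈ C₂ (k + 1))
    (hd₃ : ∀ k : ℤ, ∀ x ∈ C₃ k, d₃ x ∈ C₃ (k + 1))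
    (hdd₁ : ∀ x, d₁ (d₁ x) = 0) (hdd₂ : ∀ x, d₂ (d₂ x) = 0)
    (hdd₃ : ∀ x, d₃ (d₃ x) = 0)
    (f₁ f₂ : ℤ) (φ₁ : M₁ →ₗ[R] M₂) (φ₂ : M₂ →ₗ[R] M₃)
    (hφ₁ : ∀ k : ℤ, ∀ x ∈ C₁ k, φ₁ x ∈ C₂ (k + 1 - f₁))
    (hφ₂ : ∀ k : ℤ, ∀ x ∈ C₂ k, φ₂ x ∈ C₃ (k + 1 - f₂))
    (hφ₁d : ∀ x, d₂ (φ₁ x) = φ₁ (d₁ x))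
    (hφ₂d : ∀ x, d₃ (φ₂ x) = φ₂ (d₂ x))
    (hφφ : ∀ x, φ₂ (φ₁ x) = 0)
    (mul₁ : M₁ →ₗ[R] M₁ →ₗ[R] M₁) (mul₂ : M₂ →ₗ[R] M₂ →ₗ[R] M₂)
    (mul₃ : M₃ →ₗ[R] M₃ →ₗ[R] M₃)
    (hmem₁ : ∀ j m : ℤ, ∀ x ∈ C₁ j, ∀ y ∈ C₁ m, mul₁ x y ∈ C₁ (j + m))
    (hmem₂ : ∀ j m : ℤ, ∀ x ∈ C₂ j, ∀ y ∈ C₂ m, mul₂ x y ∈ C₂ (j + m))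
    (hmem₃ : ∀ j m : ℤ, ∀ x ∈ C₃ j, ∀ y ∈ C₃ m, mul₃ x y ∈ C₃ (j + m))
    (hLeib₁ : ∀ j : ℤ, ∀ x ∈ C₁ j, ∀ y : M₁,
      d₁ (mul₁ x y) = mul₁ (d₁ x) y + ((j.negOnePow : ℤ) • mul₁ x (d₁ y)))
    (hLeib₂ : ∀ j : ℤ, ∀ x ∈ C₂ j, ∀ y : M₂,
      d₂ (mul₂ x y) = mul₂ (d₂ x) y + ((j.negOnePow : ℤ) • mul₂ x (d₂ y)))
    (hLeib₃ : ∀ j : ℤ, ∀ x ∈ C₃ j, ∀ y : M₃,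
      d₃ (mul₃ x y) = mul₃ (d₃ x) y + ((j.negOnePow : ℤ) • mul₃ x (d₃ y)))
    (hmul₁ : ∀ x y : M₁, φ₁ (mul₁ x y) = mul₂ (φ₁ x) (φ₁ y))
    (hmul₂ : ∀ x y : M₂, φ₂ (mul₂ x y) = mul₃ (φ₂ x) (φ₂ y)) :
    -- the Leibniz-type identity for `D`
    (∀ k m : ℤ, ∀ α₁ ∈ C₁ k, ∀ α₂ ∈ C₂ (k - f₁), ∀ α₃ ∈ C₃ (k - f₁ - f₂),
      ∀ γ ∈ C₁ m,
        rollD3 d₁ d₂ d₃ φ₁ φ₂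
            (mul₁ α₁ γ, mul₂ α₂ (φ₁ γ), mul₃ α₃ (φ₂ (φ₁ γ)))
          = (mul₁ (rollD3 d₁ d₂ d₃ φ₁ φ₂ (α₁, α₂, α₃)).1 γ,
             mul₂ (rollD3 d₁ d₂ d₃ φ₁ φ₂ (α₁, α₂, α₃)).2.1 (φ₁ γ),
             mul₃ (rollD3 d₁ d₂ d₃ φ₁ φ₂ (α₁, α₂, α₃)).2.2 (φ₂ (φ₁ γ)))
            + (k.negOnePow : ℤ) •
              (((mul₁ α₁ (d₁ γ),
                 -((f₁.negOnePow : ℤ) • mul₂ α₂ (φ₁ (d₁ γ))),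
                 ((f₁ + f₂).negOnePow : ℤ) • mul₃ α₃ (φ₂ (φ₁ (d₁ γ)))))
                : M₁ × M₂ × M₃))
    -- in particular, when `f₁` and `f₂` are both odd, `D` satisfies the Leibniz rule
    ∧ (Odd f₁ → Odd f₂ →
        ∀ k m : ℤ, ∀ α₁ ∈ C₁ k, ∀ α₂ ∈ C₂ (k - f₁), ∀ α₃ ∈ C₃ (k - f₁ - f₂),
        ∀ γ ∈ C₁ m,
          rollD3 d₁ d₂ d₃ φ₁ φ₂
              (mul₁ α₁ γ, mul₂ α₂ (φ₁ γ), mul₃ α₃ (φ₂ (φ₁ γ)))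
            = (mul₁ (rollD3 d₁ d₂ d₃ φ₁ φ₂ (α₁, α₂, α₃)).1 γ,
               mul₂ (rollD3 d₁ d₂ d₃ φ₁ φ₂ (α₁, α₂, α₃)).2.1 (φ₁ γ),
               mul₃ (rollD3 d₁ d₂ d₃ φ₁ φ₂ (α₁, α₂, α₃)).2.2 (φ₂ (φ₁ γ)))
              + (k.negOnePow : ℤ) •
                (((mul₁ α₁ (d₁ γ),
                   mul₂ α₂ (φ₁ (d₁ γ)),
                   mul₃ α₃ (φ₂ (φ₁ (d₁ γ))))) : M₁ × M₂ × M₃)) :=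
  stmt_5_general C₁ C₂ C₃ d₁ d₂ d₃ f₁ f₂ φ₁ φ₂ hφ₁d hφ₂d mul₁ mul₂ mul₃ hLeib₁ hLeib₂ hLeib₃ hmul₁
    hmul₂
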